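/- Let g_1, …, g_T be real numbers with |g_t| ≤ G_∞ for all t = 1, …, T. Then ∑_{t=1}^T g_t²/√t ≤ 2G_∞·√(∑_{t=1}^T g_t²). In particular, since 1/t ≤ 1/√t for t ≥ 1, also ∑_{t=1}^T g_t²/t ≤ 2G_∞·√(∑_{t=1}^T g_t²). -/
import Mathlib

lemma aux_sum_sq (g : ℕ → ℝ) (Ginf : ℝ) :
    ∀ T : ℕ, (∀ t ∈ Finset.Icc 1 T, |g t| ≤ Ginf) →
    ∑ t ∈ Finset.Icc 1 T, g t ^ 2 / Real.sqrt t
      ≤ 2 * Ginf * Real.sqrt (∑ t ∈ Finset.Icc 1 T, g t ^ 2) := by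
  intro T
  induction T with
  | zero => simp
  | succ T ih =>
    intro hg
    have hg' : ∀ t ∈ Finset.Icc 1 T, |g t| ≤ Ginf := by
      intro t ht
      exact hg t (Finset.mem_Icc.mpr ⟨(Finset.mem_Icc.mp ht).1, (Finset.mem_Icc.mp ht).2.trans (Nat.le_succ T)⟩)
    have hG : 0 ≤ Ginf := le_trans (abs_nonneg _) (hg (T+1) (Finset.mem_Icc.mpr ⟨Nat.le_add_left 1 T, le_refl _⟩))
    rw [Finset.sum_Icc_succ_top (Nat.le_add_left 1 T), Finset.sum_Icc_succ_top (Nat.le_add_left 1 T)]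
    set S : ℝ := ∑ t ∈ Finset.Icc 1 T, g t ^ 2 with hS
    have hSnn : 0 ≤ S := Finset.sum_nonneg fun t _ => sq_nonneg _
    set a : ℝ := g (T+1) ^ 2 with ha
    have hann : 0 ≤ a := sq_nonneg _
    have hsum_bound : S + a ≤ (T+1 : ℝ) * Ginf ^ 2 := by
      have : S + a = ∑ t ∈ Finset.Icc 1 (T+1), g t ^ 2 := by
        rw [Finset.sum_Icc_succ_top (Nat.le_add_left 1 T)]
      rw [this]
      calc ∑ t ∈ Finset.Icc 1 (T+1), g t ^ 2
          ≤ ∑ t ∈ Finset.Icc 1 (T+1), Ginf ^ 2 := by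
            apply Finset.sum_le_sum
            intro t ht
            calc g t ^ 2 = |g t| ^ 2 := (sq_abs _).symm
              _ ≤ Ginf ^ 2 := pow_le_pow_left₀ (abs_nonneg _) (hg t ht) 2
        _ = (T+1 : ℝ) * Ginf ^ 2 := by
            rw [Finset.sum_const, Nat.card_Icc]
            simp [nsmul_eq_mul]
    set x := Real.sqrt S with hx
    set y := Real.sqrt (S + a) with hy
    have hx2 : x ^ 2 = S := Real.sq_sqrt hSnn
    have hy2 : y ^ 2 = S + a := Real.sq_sqrt (by linarith)
    have hxnn : 0 ≤ x := Real.sqrt_nonneg _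
    have hynn : 0 ≤ y := Real.sqrt_nonneg _
    have hxy : x ≤ y := Real.sqrt_le_sqrt (by linarith)
    have hyle : y ≤ Ginf * Real.sqrt (T+1) := by
      rw [hy]
      calc Real.sqrt (S + a) ≤ Real.sqrt ((T+1 : ℝ) * Ginf ^ 2) := Real.sqrt_le_sqrt hsum_bound
        _ = Real.sqrt (T+1) * Ginf := by
            rw [Real.sqrt_mul (by positivity), Real.sqrt_sq hG]
        _ = Ginf * Real.sqrt (T+1) := mul_comm _ _
    have hz : (0:ℝ) < Real.sqrt ((T:ℝ)+1) := Real.sqrt_pos.mpr (by positivity)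
    have key : a / Real.sqrt ((T:ℝ)+1) ≤ 2 * Ginf * y - 2 * Ginf * x := by
      rw [div_le_iff₀ hz]
      nlinarith [sq_nonneg (y - x), mul_nonneg hG (sub_nonneg.mpr hxy),
        mul_le_mul_of_nonneg_left hyle (sub_nonneg.mpr hxy)]
    have := ih hg'
    push_cast
    linarith [this, key]

/-- If |g_t| ≤ G_∞ for t = 1,…,T, then ∑ g_t²/√t ≤ 2G_∞·√(∑ g_t²),
and in particular ∑ g_t²/t ≤ 2G_∞·√(∑ g_t²). -/
theorem sum_sq_div_sqrt_le
    (T : ℕ) (hT : 1 ≤ T) (g : ℕ → ℝ) (Ginf : ℝ)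
    (hg : ∀ t ∈ Finset.Icc 1 T, |g t| ≤ Ginf) :
    (∑ t ∈ Finset.Icc 1 T, g t ^ 2 / Real.sqrt t
        ≤ 2 * Ginf * Real.sqrt (∑ t ∈ Finset.Icc 1 T, g t ^ 2)) ∧
    (∑ t ∈ Finset.Icc 1 T, g t ^ 2 / t
        ≤ 2 * Ginf * Real.sqrt (∑ t ∈ Finset.Icc 1 T, g t ^ 2)) := by
  have h1 := aux_sum_sq g Ginf T hg
  refine ⟨h1, le_trans ?_ h1⟩
  apply Finset.sum_le_sum
  intro t ht
  have ht1 : (1:ℝ) ≤ (t:ℝ) := by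
    exact_mod_cast (Finset.mem_Icc.mp ht).1
  have hsq : Real.sqrt (t:ℝ) ^ 2 = (t:ℝ) := Real.sq_sqrt (by linarith)
  have hs : Real.sqrt t ≤ (t:ℝ) := by nlinarith [sq_nonneg (Real.sqrt (t:ℝ) - 1), Real.sqrt_nonneg (t:ℝ)]
  have hspos : 0 < Real.sqrt (t:ℝ) := Real.sqrt_pos.mpr (by linarith)
  exact div_le_div_of_nonneg_left (sq_nonneg _) hspos hs
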